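/- Let X, Y, Z be finite random variables with supports 𝒳, 𝒴, 𝒵 respectively, such that X is independent of Z, Z is a function of (X, Y), and |𝒴| ≤ |𝒵|. Then |𝒴| = |𝒵| and Y is a function of (X, Z). Moreover, if Z is uniformly distributed on 𝒵, then Y is uniformly distributed on 𝒴 and independent of X. -/
import Mathlib


open scoped Classical

noncomputable section

/-- The probability of the event `S` under the probability mass function `p`. -/
def Pr {Ω : Type} (p : Ω → ℝ) (S : Set Ω) : ℝ := ∑' ω : S, p ω

/-- `p` is a probability mass function on the sample space `Ω`. -/
def IsProb {Ω : Type} (p : Ω → ℝ) : Prop := (∀ ω, 0 ≤ p ω) ∧ Pr p Set.univ = 1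

/-- The support of a random variable `X`: the set of values attained with positive
probability. -/
def supp {Ω α : Type} (p : Ω → ℝ) (X : Ω → α) : Set α := {a | 0 < Pr p {ω | X ω = a}}

/-- `X` is almost surely a function of `Y` (written `X ≤ι Y` in the paper). -/
def FuncOf {Ω α β : Type} (p : Ω → ℝ) (X : Ω → α) (Y : Ω → β) : Prop :=
  ∃ f : β → α, Pr p {ω | X ω = f (Y ω)} = 1

/-- The random variables `X` and `Y` are independent. -/
def IndepRV {Ω α β : Type} (p : Ω → ℝ) (X : Ω → α) (Y : Ω → β) : Prop :=
  ∀ (a : α) (b : β), Pr p {ω | X ω = a ∧ Y ω = b} = Pr p {ω | X ω = a} * Pr p {ω | Y ω = b}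

/-- The random variables `X`, `Y`, `Z` are mutually independent:
`X ⟂ Y` and `(X, Y) ⟂ Z`. -/
def Indep3 {Ω α β γ : Type} (p : Ω → ℝ) (X : Ω → α) (Y : Ω → β) (Z : Ω → γ) : Prop :=
  IndepRV p X Y ∧ IndepRV p (fun ω => (X ω, Y ω)) Z

/-- The predicate `tri(X, Y, Z)`: each variable is a.s. a function of the other two, and the
three variables are pairwise independent. -/
def tri {Ω α β γ : Type} (p : Ω → ℝ) (X : Ω → α) (Y : Ω → β) (Z : Ω → γ) : Prop :=
  FuncOf p X (fun ω => (Y ω, Z ω)) ∧ FuncOf p Y (fun ω => (X ω, Z ω)) ∧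
    FuncOf p Z (fun ω => (X ω, Y ω)) ∧
    IndepRV p X Y ∧ IndepRV p X Z ∧ IndepRV p Y Z


section PrHelpers
variable {Ω : Type} {p : Ω → ℝ}

lemma Pr_ind (p : Ω → ℝ) (S : Set Ω) : Pr p S = ∑' ω, S.indicator p ω := tsum_subtype S p

lemma IsProb.summable' (hp : IsProb p) : Summable p := by
  by_contra h
  have h2 := hp.2
  rw [Pr_ind, Set.indicator_univ, tsum_eq_zero_of_not_summable h] at h2
  norm_num at h2

lemma IsProb.summable_ind (hp : IsProb p) (S : Set Ω) : Summable (S.indicator p) :=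
  hp.summable'.indicator S

lemma Pr_nonneg (hp : IsProb p) (S : Set Ω) : 0 ≤ Pr p S := by
  rw [Pr_ind]
  exact tsum_nonneg fun ω => Set.indicator_nonneg (fun a _ => hp.1 a) ω

lemma Pr_mono (hp : IsProb p) {S T : Set Ω} (h : S ⊆ T) : Pr p S ≤ Pr p T := by
  rw [Pr_ind, Pr_ind]
  exact Summable.tsum_le_tsum (fun ω => Set.indicator_le_indicator_of_subset h (fun a => hp.1 a) ω)
    (hp.summable_ind S) (hp.summable_ind T)

lemma le_Pr (hp : IsProb p) {S : Set Ω} {ω : Ω} (h : ω ∈ S) : p ω ≤ Pr p S := by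
  rw [Pr_ind]
  have := Summable.le_tsum (hp.summable_ind S) ω
    (fun b _ => Set.indicator_nonneg (fun a _ => hp.1 a) b)
  simpa [Set.indicator_of_mem h] using this

lemma Pr_congr {S T : Set Ω} (h : ∀ ω, p ω ≠ 0 → (ω ∈ S ↔ ω ∈ T)) : Pr p S = Pr p T := by
  rw [Pr_ind, Pr_ind]
  congr 1
  funext ω
  by_cases hω : p ω = 0
  · simp [Set.indicator_apply, hω]
  · simp only [Set.indicator_apply]
    exact if_congr (h ω hω) rfl rfl

lemma Pr_union (hp : IsProb p) {S T : Set Ω} (h : ∀ ω, ω ∈ S → ω ∉ T) :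
    Pr p (S ∪ T) = Pr p S + Pr p T := by
  rw [Pr_ind, Pr_ind, Pr_ind, ← Summable.tsum_add (hp.summable_ind S) (hp.summable_ind T)]
  congr 1
  funext ω
  by_cases hS : ω ∈ S
  · simp [Set.indicator_apply, hS, h ω hS]
  · by_cases hT : ω ∈ T <;> simp [Set.indicator_apply, hS, hT]

lemma Pr_empty (p : Ω → ℝ) : Pr p (∅ : Set Ω) = 0 := by
  rw [Pr_ind]; simp

lemma Pr_eq_one_iff (hp : IsProb p) {S : Set Ω} :
    Pr p S = 1 ↔ ∀ ω, p ω ≠ 0 → ω ∈ S := by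
  have hu : Pr p S + Pr p Sᶜ = 1 := by
    rw [← Pr_union hp (show ∀ ω, ω ∈ S → ω ∉ Sᶜ from fun ω hω h2 => h2 hω),
      Set.union_compl_self, hp.2]
  constructor
  · intro h1 ω hω
    by_contra hωS
    have h0 : Pr p Sᶜ = 0 := by linarith
    have := le_Pr hp (show ω ∈ Sᶜ from hωS)
    have hpos := lt_of_le_of_ne (hp.1 ω) (Ne.symm hω)
    linarith
  · intro h
    have h0 : Pr p Sᶜ = 0 := by
      rw [Pr_ind]
      have : Sᶜ.indicator p = fun _ => 0 := by
        funext ω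
        by_cases hω : ω ∈ Sᶜ
        · rw [Set.indicator_of_mem hω]
          by_contra hne
          exact hω (h ω hne)
        · exact Set.indicator_of_notMem hω p
      rw [this]; exact tsum_zero
    linarith

lemma Pr_pos_iff (hp : IsProb p) {S : Set Ω} :
    0 < Pr p S ↔ ∃ ω ∈ S, p ω ≠ 0 := by
  constructor
  · intro h
    by_contra hc
    push_neg at hc
    have : Pr p S = 0 := by
      rw [Pr_ind]
      have : S.indicator p = fun _ => 0 := by
        funext ω
        by_cases hω : ω ∈ S
        · rw [Set.indicator_of_mem hω]; exact hc ω hω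
        · exact Set.indicator_of_notMem hω p
      rw [this]; exact tsum_zero
    linarith
  · rintro ⟨ω, hωS, hω⟩
    exact lt_of_lt_of_le (lt_of_le_of_ne (hp.1 ω) (Ne.symm hω)) (le_Pr hp hωS)

lemma Pr_sum_fiber {α : Type} (hp : IsProb p) (S : Set Ω) (X : Ω → α) (F : Finset α) :
    ∑ a ∈ F, Pr p {ω | ω ∈ S ∧ X ω = a} = Pr p {ω | ω ∈ S ∧ X ω ∈ F} := by
  induction F using Finset.induction with
  | empty => simp [Pr_empty]
  | @insert a F ha ih =>
    rw [Finset.sum_insert ha, ih]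
    rw [← Pr_union hp (S := {ω | ω ∈ S ∧ X ω = a}) (T := {ω | ω ∈ S ∧ X ω ∈ F})]
    · apply Pr_congr
      intro ω _
      simp only [Set.mem_union, Set.mem_setOf_eq, Finset.mem_insert]
      tauto
    · rintro ω ⟨_, rfl⟩ ⟨_, hmem⟩
      exact ha hmem

end PrHelpers

/-- Proposition `fcn_flip`: if `X, Y, Z` are finite random variables
with supports `𝒳, 𝒴, 𝒵`, `X ⟂ Z`, `Z` is a.s. a function of `(X, Y)`, and `|𝒴| ≤ |𝒵|`,
then `|𝒴| = |𝒵|` and `Y` is a.s. a function of `(X, Z)`; moreover, if `Z` is uniformly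
distributed (on its support), then `Y` is uniformly distributed and independent of `X`. -/
theorem fcn_flip {Ω α β γ : Type} (p : Ω → ℝ) (hp : IsProb p)
    (X : Ω → α) (Y : Ω → β) (Z : Ω → γ)
    (hXfin : (supp p X).Finite) (hYfin : (supp p Y).Finite) (hZfin : (supp p Z).Finite)
    (hindep : IndepRV p X Z)
    (hfunc : FuncOf p Z (fun ω => (X ω, Y ω)))
    (hcard : (supp p Y).ncard ≤ (supp p Z).ncard) :
    ((supp p Y).ncard = (supp p Z).ncard ∧ FuncOf p Y (fun ω => (X ω, Z ω))) ∧
    ((∀ z ∈ supp p Z, Pr p {ω | Z ω = z} = ((supp p Z).ncard : ℝ)⁻¹) →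
      (∀ y ∈ supp p Y, Pr p {ω | Y ω = y} = ((supp p Y).ncard : ℝ)⁻¹) ∧
        IndepRV p Y X) := by
  obtain ⟨f, hf⟩ := hfunc
  have hG : ∀ ω, p ω ≠ 0 → Z ω = f (X ω, Y ω) := (Pr_eq_one_iff hp).1 hf
  have hposp : ∀ ω, p ω ≠ 0 → 0 < p ω := fun ω h => lt_of_le_of_ne (hp.1 ω) (Ne.symm h)
  have hmemX : ∀ ω, p ω ≠ 0 → X ω ∈ supp p X := fun ω h =>
    lt_of_lt_of_le (hposp ω h) (le_Pr hp rfl)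
  have hmemY : ∀ ω, p ω ≠ 0 → Y ω ∈ supp p Y := fun ω h =>
    lt_of_lt_of_le (hposp ω h) (le_Pr hp rfl)
  set Yx : α → Set β := fun x => {y | 0 < Pr p {ω | X ω = x ∧ Y ω = y}} with hYxdef
  have hYx_mem : ∀ ω, p ω ≠ 0 → Y ω ∈ Yx (X ω) := fun ω h =>
    lt_of_lt_of_le (hposp ω h) (le_Pr hp ⟨rfl, rfl⟩)
  have hYxsub : ∀ x, Yx x ⊆ supp p Y := by
    intro x y hy
    obtain ⟨ω, ⟨hXω, hYω⟩, hω⟩ := (Pr_pos_iff hp).1 hy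
    exact hYω ▸ hmemY ω hω
  have hmapsTo : ∀ x, ∀ y ∈ Yx x, f (x, y) ∈ supp p Z := by
    intro x y hy
    obtain ⟨ω, ⟨hXω, hYω⟩, hω⟩ := (Pr_pos_iff hp).1 hy
    have hz : Z ω = f (x, y) := by rw [hG ω hω, hXω, hYω]
    exact lt_of_lt_of_le (hposp ω hω) (le_Pr hp hz)
  have hsurj : ∀ x ∈ supp p X, supp p Z ⊆ (fun y => f (x, y)) '' (Yx x) := by
    intro x hx z hz
    have hpos : 0 < Pr p {ω | X ω = x ∧ Z ω = z} := by
      rw [hindep x z]; exact mul_pos hx hz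
    obtain ⟨ω, ⟨hXω, hZω⟩, hω⟩ := (Pr_pos_iff hp).1 hpos
    subst hXω
    refine ⟨Y ω, hYx_mem ω hω, ?_⟩
    show f (X ω, Y ω) = z
    rw [← hG ω hω, hZω]
  have himg : ∀ x ∈ supp p X, (fun y => f (x, y)) '' (Yx x) = supp p Z := by
    intro x hx
    apply Set.Subset.antisymm
    · rintro z ⟨y, hy, rfl⟩; exact hmapsTo x y hy
    · exact hsurj x hx
  have hZleYx : ∀ x ∈ supp p X, (supp p Z).ncard ≤ (Yx x).ncard := by
    intro x hx
    calc (supp p Z).ncard = ((fun y => f (x, y)) '' (Yx x)).ncard := by rw [himg x hx]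
      _ ≤ (Yx x).ncard := Set.ncard_image_le (hYfin.subset (hYxsub x))
  have hYeq : ∀ x ∈ supp p X, Yx x = supp p Y := fun x hx =>
    Set.eq_of_subset_of_ncard_le (hYxsub x) (le_trans hcard (hZleYx x hx)) hYfin
  obtain ⟨ω₀, -, hω₀⟩ := (Pr_pos_iff hp).1 (show 0 < Pr p (Set.univ : Set Ω) by
    rw [hp.2]; norm_num)
  have hx₀ := hmemX ω₀ hω₀
  have hcardeq : (supp p Y).ncard = (supp p Z).ncard := by
    refine le_antisymm hcard ?_
    calc (supp p Z).ncard ≤ (Yx (X ω₀)).ncard := hZleYx _ hx₀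
      _ = (supp p Y).ncard := by rw [hYeq _ hx₀]
  have hinj : ∀ x ∈ supp p X, Set.InjOn (fun y => f (x, y)) (supp p Y) := by
    intro x hx
    apply Set.injOn_of_ncard_image_eq _ hYfin
    rw [← hYeq x hx, himg x hx, hYeq x hx]
    exact hcardeq.symm
  set g : α × γ → β := fun xz =>
    if h : ∃ y ∈ supp p Y, f (xz.1, y) = xz.2 then h.choose else Y ω₀ with hgdef
  have hgspec : ∀ ω, p ω ≠ 0 → Y ω = g (X ω, Z ω) := by
    intro ω hω
    have hy : Y ω ∈ supp p Y := hmemY ω hω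
    have hex : ∃ y ∈ supp p Y, f ((X ω, Z ω).1, y) = (X ω, Z ω).2 :=
      ⟨Y ω, hy, (hG ω hω).symm⟩
    rw [hgdef]
    simp only [dif_pos hex]
    obtain ⟨hy', hfy'⟩ := hex.choose_spec
    exact (hinj (X ω) (hmemX ω hω) hy' hy (by simp only []; rw [hfy', hG ω hω])).symm
  have hkey : ∀ x ∈ supp p X, ∀ y ∈ supp p Y,
      Pr p {ω | X ω = x ∧ Y ω = y} = Pr p {ω | X ω = x} * Pr p {ω | Z ω = f (x, y)} := by
    intro x hx y hy
    rw [← hindep x (f (x, y))]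
    apply Pr_congr
    intro ω hω
    simp only [Set.mem_setOf_eq]
    constructor
    · rintro ⟨h1, h2⟩
      refine ⟨h1, ?_⟩
      rw [hG ω hω, h1, h2]
    · rintro ⟨h1, h2⟩
      refine ⟨h1, ?_⟩
      have hm : Y ω ∈ supp p Y := hmemY ω hω
      have : f (x, Y ω) = f (x, y) := by
        calc f (x, Y ω) = Z ω := by rw [hG ω hω, h1]
          _ = f (x, y) := h2
      exact hinj x hx hm hy this
  have hmapsY : ∀ x ∈ supp p X, ∀ y ∈ supp p Y, f (x, y) ∈ supp p Z := by
    intro x hx y hy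
    exact hmapsTo x y (by rw [hYeq x hx]; exact hy)
  have hXtotal : ∑ x ∈ hXfin.toFinset, Pr p {ω | X ω = x} = 1 := by
    have h1 := Pr_sum_fiber hp Set.univ X hXfin.toFinset
    have h2 : Pr p {ω | ω ∈ Set.univ ∧ X ω ∈ hXfin.toFinset} = 1 := by
      rw [← hp.2]
      apply Pr_congr
      intro ω hω
      simp [hXfin.mem_toFinset, hmemX ω hω]
    rw [h2] at h1
    rw [← h1]
    apply Finset.sum_congr rfl
    intro x _
    apply Pr_congr
    intro ω _
    simp
  have hYmarg : ∀ y, Pr p {ω | Y ω = y}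
      = ∑ x ∈ hXfin.toFinset, Pr p {ω | X ω = x ∧ Y ω = y} := by
    intro y
    have h1 := Pr_sum_fiber hp {ω | Y ω = y} X hXfin.toFinset
    have h2 : Pr p {ω | ω ∈ {ω | Y ω = y} ∧ X ω ∈ hXfin.toFinset} = Pr p {ω | Y ω = y} := by
      apply Pr_congr
      intro ω hω
      simp [hXfin.mem_toFinset, hmemX ω hω]
    rw [h2] at h1
    rw [← h1]
    apply Finset.sum_congr rfl
    intro x _
    apply Pr_congr
    intro ω _
    simp only [Set.mem_setOf_eq]
    tauto
  refine ⟨⟨hcardeq, g, (Pr_eq_one_iff hp).2 (fun ω hω => hgspec ω hω)⟩, ?_⟩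
  intro hu
  have hYu : ∀ y ∈ supp p Y, Pr p {ω | Y ω = y} = ((supp p Y).ncard : ℝ)⁻¹ := by
    intro y hy
    rw [hYmarg y]
    have hterm : ∀ x ∈ hXfin.toFinset, Pr p {ω | X ω = x ∧ Y ω = y}
        = Pr p {ω | X ω = x} * ((supp p Z).ncard : ℝ)⁻¹ := by
      intro x hxF
      have hx := hXfin.mem_toFinset.1 hxF
      rw [hkey x hx y hy, hu (f (x, y)) (hmapsY x hx y hy)]
    rw [Finset.sum_congr rfl hterm, ← Finset.sum_mul, hXtotal, one_mul, hcardeq]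
  refine ⟨hYu, ?_⟩
  intro y x
  by_cases hx : x ∈ supp p X
  · by_cases hy : y ∈ supp p Y
    · have hswap : Pr p {ω | Y ω = y ∧ X ω = x} = Pr p {ω | X ω = x ∧ Y ω = y} := by
        apply Pr_congr
        intro ω _
        simp only [Set.mem_setOf_eq]
        tauto
      rw [hswap, hkey x hx y hy, hu _ (hmapsY x hx y hy), hYu y hy, hcardeq]
      ring
    · have hy0 : Pr p {ω | Y ω = y} = 0 :=
        le_antisymm (not_lt.1 hy) (Pr_nonneg hp _)
      have hle : Pr p {ω | Y ω = y ∧ X ω = x} ≤ 0 := by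
        rw [← hy0]
        exact Pr_mono hp (fun ω h => h.1)
      rw [hy0, zero_mul]
      exact le_antisymm hle (Pr_nonneg hp _)
  · have hx0 : Pr p {ω | X ω = x} = 0 :=
      le_antisymm (not_lt.1 hx) (Pr_nonneg hp _)
    have hle : Pr p {ω | Y ω = y ∧ X ω = x} ≤ 0 := by
      rw [← hx0]
      exact Pr_mono hp (fun ω h => h.2)
    rw [hx0, mul_zero]
    exact le_antisymm hle (Pr_nonneg hp _)
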